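/- (Failure of Cut for proper tolerant consequence, concrete witness) For the ST parameter (V = {0, 1/2, 1}, T = {1}, F = {0}) with the ST tolerance restriction (M(Pt) = 1 and M(Pu) = 0 imply M(t ∼_P u) = 0): the arguments ({P t₁, t₁ ∼_P t₂}, {P t₂}) and ({P t₂, t₂ ∼_P t₃}, {P t₃}) are both ST-tolerant valid, but ({P t₁, t₁ ∼_P t₂, t₂ ∼_P t₃}, {P t₃}) is not ST-tolerant valid. -/
import Mathlib


inductive Atom (Pred Term : Type) where
  | app : Pred → Term → Atom Pred Term
  | sim : Pred → Term → Term → Atom Pred Term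

def STTolValid (Γ Δ : Set (Atom Unit (Fin 3))) : Prop :=
  ¬ ∃ M : Atom Unit (Fin 3) → ℝ,
      (∀ a, M a ∈ ({0, 1/2, 1} : Set ℝ)) ∧
      (∀ (P : Unit) (t u : Fin 3), M (.sim P t u) = M (.sim P u t)) ∧
      (∀ (P : Unit) (t u : Fin 3), M (.app P t) = 1 → M (.app P u) = 0 → M (.sim P t u) = 0) ∧
      (∀ γ ∈ Γ, M γ = 1) ∧ (∀ δ ∈ Δ, M δ = 0)

noncomputable def myM : Atom Unit (Fin 3) → ℝ
  | .app _ 0 => 1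
  | .app _ 1 => 1/2
  | .app _ _ => 0
  | .sim _ 0 2 => 0
  | .sim _ 2 0 => 0
  | .sim _ _ _ => 1

theorem stmt10 :
    STTolValid {Atom.app () 0, Atom.sim () 0 1} {Atom.app () 1} ∧
    STTolValid {Atom.app () 1, Atom.sim () 1 2} {Atom.app () 2} ∧
    ¬ STTolValid {Atom.app () 0, Atom.sim () 0 1, Atom.sim () 1 2} {Atom.app () 2} := by
  refine ⟨?_, ?_, ?_⟩
  · rintro ⟨M, _, _, htol, hΓ, hΔ⟩
    have h1 := hΓ _ (Set.mem_insert _ _)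
    have h2 := hΓ _ (by right; rfl)
    have h3 := hΔ _ rfl
    have := htol () 0 1 h1 h3
    rw [h2] at this; norm_num at this
  · rintro ⟨M, _, _, htol, hΓ, hΔ⟩
    have h1 := hΓ _ (Set.mem_insert _ _)
    have h2 := hΓ _ (by right; rfl)
    have h3 := hΔ _ rfl
    have := htol () 1 2 h1 h3
    rw [h2] at this; norm_num at this
  · intro h
    apply h
    refine ⟨myM, ?_, ?_, ?_, ?_, ?_⟩
    · intro a
      rcases a with ⟨_, t⟩ | ⟨_, t, u⟩ <;> fin_cases t <;> simp [myM]
      all_goals fin_cases u <;> simp [myM]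
    · intro _ t u
      fin_cases t <;> fin_cases u <;> simp [myM]
    · intro _ t u ht hu
      fin_cases t <;> fin_cases u <;> simp_all [myM]
    · intro γ hγ
      rcases hγ with h | h | h <;> subst h <;> simp [myM]
    · intro δ hδ
      simp only [Set.mem_singleton_iff] at hδ; subst hδ; simp [myM]
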